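/- For any t ∈ ℝ and d ≥ 2, the matrix C₅ₜ(d) = I_{d-2} ⊕ [[(1-t³)^{1/3}, 0],[t, 0]] is a critical point of the Frobenius loss φ(W) = ∑_{i,j} ⟨wᵢ,wⱼ⟩³ − 2∑_{i,j} ⟨wᵢ,eⱼ⟩³ + d, i.e., ∇φ(C₅ₜ(d)) = 0. -/

import Mathlib

/-!
The derivative of `φ` at `W` pairs a direction `H` with the gradient
`6 (∑ⱼ ⟨wᵢ,wⱼ⟩² wⱼₖ - wᵢₖ²)`. If every row is a multiple of a unit vector, `wᵢ = rᵢ e_{q i}`,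
then `⟨wᵢ,wⱼ⟩ = [q i = q j] rᵢ rⱼ`, so `∑ⱼ ⟨wᵢ,wⱼ⟩² wⱼₖ = [k = q i] rᵢ² ∑_{q j = q i} rⱼ³`, which is
`wᵢₖ²` as soon as the cubes of the entries sharing a column sum to `1`. In `C₅ₜ(d)` the only
shared column carries `(1 - t³)^{1/3}` and `t`.
-/

/-- Real cube root. -/
noncomputable def cbrt (x : ℝ) : ℝ :=
  if 0 ≤ x then x ^ ((1:ℝ)/3) else -((-x) ^ ((1:ℝ)/3))

/-- Frobenius loss `φ(W) = ∑_{i,j} ⟨wᵢ,wⱼ⟩³ − 2∑_{i,j} ⟨wᵢ,eⱼ⟩³ + d`. -/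
noncomputable def phi (d : ℕ) (W : Fin d → Fin d → ℝ) : ℝ :=
  (∑ i, ∑ j, (∑ k, W i k * W j k) ^ 3) - 2 * ∑ i, ∑ j, (W i j) ^ 3 + d

/-- The matrix `C₅ₜ(d) = I_{d-2} ⊕ [[(1-t³)^{1/3}, 0],[t, 0]]`. -/
noncomputable def C5 (d : ℕ) (t : ℝ) : Fin d → Fin d → ℝ := fun i j =>
  if (i : ℕ) < d - 2 then (if i = j then 1 else 0)
  else if (i : ℕ) = d - 2 then (if (j : ℕ) = d - 2 then cbrt (1 - t ^ 3) else 0)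
  else (if (j : ℕ) = d - 2 then t else 0)

open Finset

lemma cbrt_pow_three (x : ℝ) : cbrt x ^ 3 = x := by
  unfold cbrt
  split_ifs with h
  · rw [one_div]
    exact_mod_cast Real.rpow_inv_natCast_pow h three_ne_zero
  · rw [Odd.neg_pow (by decide), one_div]
    have := Real.rpow_inv_natCast_pow (neg_nonneg.2 (le_of_not_ge h)) three_ne_zero
    push_cast at this
    rw [this, neg_neg]

section Derivative

variable {ι κ : Type*}

noncomputable def entryCLM (i : ι) (k : κ) : (ι → κ → ℝ) →L[ℝ] ℝ :=
  (ContinuousLinearMap.proj k).comp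
    (ContinuousLinearMap.proj (R := ℝ) (φ := fun _ : ι => κ → ℝ) i)

@[simp] lemma entryCLM_apply (i : ι) (k : κ) (H : ι → κ → ℝ) : entryCLM i k H = H i k := rfl

lemma hasFDerivAt_entry (i : ι) (k : κ) (W : ι → κ → ℝ) :
    HasFDerivAt (fun W : ι → κ → ℝ => W i k) (entryCLM i k) W :=
  (entryCLM i k).hasFDerivAt

variable [Fintype ι] [Fintype κ]

noncomputable def pairingCLM (G : ι → κ → ℝ) : (ι → κ → ℝ) →L[ℝ] ℝ :=
  ∑ i, ∑ k, G i k • entryCLM i k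

@[simp] lemma pairingCLM_apply (G H : ι → κ → ℝ) :
    pairingCLM G H = ∑ i, ∑ k, G i k * H i k := by
  simp [pairingCLM]

lemma hasFDerivAt_sum_entry_pow_three (W : ι → κ → ℝ) :
    HasFDerivAt (fun W : ι → κ → ℝ => ∑ i, ∑ k, W i k ^ 3)
      (pairingCLM fun i k => 3 * W i k ^ 2) W := by
  refine (HasFDerivAt.fun_sum (u := univ) fun i _ => HasFDerivAt.fun_sum (u := univ) fun k _ =>
    (hasFDerivAt_entry i k W).pow 3).congr_fderiv (ContinuousLinearMap.ext fun H => ?_)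
  simp

lemma hasFDerivAt_sum_gram_pow_three (W : ι → κ → ℝ) :
    HasFDerivAt (fun W : ι → κ → ℝ => ∑ i, ∑ j, (∑ k, W i k * W j k) ^ 3)
      (pairingCLM fun i k => 6 * ∑ j, (∑ m, W i m * W j m) ^ 2 * W j k) W := by
  have hgram : ∀ i j, HasFDerivAt (fun W : ι → κ → ℝ => ∑ k, W i k * W j k) _ W :=
    fun i j => HasFDerivAt.fun_sum (u := univ) fun k _ =>
      (hasFDerivAt_entry i k W).mul (hasFDerivAt_entry j k W)
  refine (HasFDerivAt.fun_sum (u := univ) fun i _ => HasFDerivAt.fun_sum (u := univ) fun j _ =>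
    (hgram i j).pow 3).congr_fderiv (ContinuousLinearMap.ext fun H => ?_)
  simp only [FunLike.coe_sum, FunLike.coe_smul, Finset.sum_apply, Pi.smul_apply, add_apply,
    entryCLM_apply, smul_eq_mul, pairingCLM_apply, nsmul_eq_mul, Nat.cast_ofNat, mul_add,
    sum_add_distrib]
  have hsymm : ∀ i j, ∑ k, W i k * W j k = ∑ k, W j k * W i k :=
    fun i j => sum_congr rfl fun k _ => mul_comm _ _
  calc _ = 2 * ∑ i, ∑ j, 3 * (∑ k, W i k * W j k) ^ 2 * ∑ m, W j m * H i m := by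
        rw [two_mul, sum_comm]
        congr 1
        exact sum_congr rfl fun i _ => sum_congr rfl fun j _ => by rw [hsymm]
    _ = _ := by
        simp only [mul_sum, sum_mul]
        refine sum_congr rfl fun i _ => ?_
        rw [sum_comm]
        exact sum_congr rfl fun k _ => sum_congr rfl fun j _ => by ring

end Derivative

noncomputable def gradPhi {d : ℕ} (W : Fin d → Fin d → ℝ) (i k : Fin d) : ℝ :=
  6 * (∑ j, (∑ m, W i m * W j m) ^ 2 * W j k - W i k ^ 2)

theorem hasFDerivAt_phi {d : ℕ} (W : Fin d → Fin d → ℝ) :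
    HasFDerivAt (phi d) (pairingCLM (gradPhi W)) W := by
  refine (((hasFDerivAt_sum_gram_pow_three W).sub
    ((hasFDerivAt_sum_entry_pow_three W).const_mul 2)).add_const (d : ℝ)).congr_fderiv
    (ContinuousLinearMap.ext fun H => ?_)
  simp only [sub_apply, smul_apply, pairingCLM_apply, gradPhi, smul_eq_mul]
  rw [mul_sum, ← sum_sub_distrib]
  refine sum_congr rfl fun i _ => ?_
  rw [mul_sum, ← sum_sub_distrib]
  exact sum_congr rfl fun k _ => by ring

lemma sum_gram_sq_mul_eq_sq_of_eq_single {ι κ : Type*} [Fintype ι] [Fintype κ] [DecidableEq κ]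
    {W : ι → κ → ℝ} (q : ι → κ) (r : ι → ℝ) (hW : ∀ i, W i = Pi.single (q i) (r i))
    (hr : ∀ i, ∑ j with q j = q i, r j ^ 3 = 1) (i : ι) (k : κ) :
    ∑ j, (∑ m, W i m * W j m) ^ 2 * W j k = W i k ^ 2 := by
  have gram : ∀ j, ∑ m, W i m * W j m = if q j = q i then r i * r j else 0 := by
    intro j
    simp [hW, Pi.single_apply, eq_comm]
  calc ∑ j, (∑ m, W i m * W j m) ^ 2 * W j k
      = ∑ j with q j = q i, (if k = q i then r i ^ 2 else 0) * r j ^ 3 := by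
        rw [sum_filter]
        refine sum_congr rfl fun j _ => ?_
        rw [gram, hW, Pi.single_apply]
        by_cases hj : q j = q i <;> by_cases hk : k = q i <;> simp [hj, hk]
        ring
    _ = W i k ^ 2 := by
        rw [← mul_sum, hr, mul_one, hW, Pi.single_apply]
        split_ifs <;> ring

def C5Col (d : ℕ) (i : Fin d) : Fin d :=
  ⟨min i (d - 2), (min_le_left _ _).trans_lt i.isLt⟩

noncomputable def C5Entry (d : ℕ) (t : ℝ) (i : Fin d) : ℝ :=
  if (i : ℕ) < d - 2 then 1 else if (i : ℕ) = d - 2 then cbrt (1 - t ^ 3) else t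

lemma C5_eq_single (d : ℕ) (t : ℝ) (i : Fin d) :
    C5 d t i = Pi.single (C5Col d i) (C5Entry d t i) := by
  funext k
  simp only [C5, C5Entry, C5Col, Pi.single_apply, Fin.ext_iff]
  split_ifs <;> first | rfl | omega

lemma sum_C5Entry_pow_three (d : ℕ) (hd : 2 ≤ d) (t : ℝ) (i : Fin d) :
    ∑ j with C5Col d j = C5Col d i, C5Entry d t j ^ 3 = 1 := by
  by_cases hi : (i : ℕ) < d - 2
  · have : univ.filter (fun j => C5Col d j = C5Col d i) = {i} := by
      ext j; simp [C5Col, Fin.ext_iff]; omega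
    rw [this, sum_singleton, C5Entry, if_pos hi, one_pow]
  · have : univ.filter (fun j => C5Col d j = C5Col d i) =
        {⟨d - 2, by omega⟩, ⟨d - 1, by omega⟩} := by
      ext j; simp [C5Col, Fin.ext_iff]; omega
    rw [this, sum_pair (by simp [Fin.ext_iff]; omega), C5Entry, if_neg (by simp), if_pos rfl,
      C5Entry, if_neg (by simp; omega), if_neg (by simp; omega), cbrt_pow_three]
    ring

theorem stmt1 (d : ℕ) (hd : 2 ≤ d) (t : ℝ) : fderiv ℝ (phi d) (C5 d t) = 0 := by
  have hgrad : gradPhi (C5 d t) = 0 := by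
    ext i k
    rw [gradPhi, sum_gram_sq_mul_eq_sq_of_eq_single _ _ (C5_eq_single d t)
      (sum_C5Entry_pow_three d hd t), sub_self, mul_zero, Pi.zero_apply, Pi.zero_apply]
  rw [(hasFDerivAt_phi _).fderiv, hgrad]
  ext H
  simp
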